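/- Let q₀ ∈ ℍ ∖ ℝ, m ≥ 1, and set 𝔓_{q₀,m}(x) = m(x − q₀)^{·2} + (m+1)Δ_{q₀}(x), where (x−q₀)^{·2} denotes the slice square. Then: (v_s 𝔓_{q₀,m})(q₀) = 2m(Im q₀)², (∂_s 𝔓_{q₀,m})(q₀) = −2m·Im(q₀), (∂_c 𝔓_{q₀,m})(q₀) = 2(m+1)·Im(q₀), (∂_c∂_s)𝔓_{q₀,m} ≡ 2m+1, and (∂_s∂_c)𝔓_{q₀,m} ≡ 2(2m+1). -/

import Mathlib

noncomputable section

open Quaternion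

abbrev ℍq := Quaternion ℝ

/-- Spherical value of a function of a quaternionic variable. -/
def svalue (f : ℍq → ℍq) (x : ℍq) : ℍq := (f x + f (star x)) / 2

/-- Spherical derivative of a function of a quaternionic variable. -/
def sderiv' (f : ℍq → ℍq) (x : ℍq) : ℍq := (2 * x.im)⁻¹ * (f x - f (star x))

/-- The imaginary unit `Im(x)/|Im(x)|` attached to a (non-real) quaternion. -/
def qJ (x : ℍq) : ℍq := (‖x.im‖)⁻¹ • x.im

/-- Slice (Cullen) derivative `∂_c f = (1/2)(∂/∂α − I ∂/∂β) f` at `x = α + Iβ`. -/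
def cderiv (f : ℍq → ℍq) (x : ℍq) : ℍq :=
  (1/2 : ℝ) • (fderiv ℝ f x 1 - qJ x * fderiv ℝ f x (qJ x))

/-- The conjugate operator `∂̄_c f = (1/2)(∂/∂α + I ∂/∂β) f`. -/
def cderivBar (f : ℍq → ℍq) (x : ℍq) : ℍq :=
  (1/2 : ℝ) • (fderiv ℝ f x 1 + qJ x * fderiv ℝ f x (qJ x))

/-- A circular (axially symmetric) subset of the quaternions. -/
def IsCircular (Ω : Set ℍq) : Prop :=
  ∀ x ∈ Ω, ∀ y : ℍq, y.re = x.re → ‖y.im‖ = ‖x.im‖ → y ∈ Ω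

/-- A slice function on `Ω`: it is determined by the representation formula
`f(α + Iβ) = F₀(α,β) + I F₁(α,β)` with `F₀ = v_s f`, `F₁ = β ∂_s f`. -/
def IsSlice (Ω : Set ℍq) (f : ℍq → ℍq) : Prop :=
  ∀ x ∈ Ω, ∀ y ∈ Ω, x.re = y.re → ‖x.im‖ = ‖y.im‖ →
    f x = svalue f y + x.im * sderiv' f y

/-- A slice regular function on a circular domain: a real-differentiable slice
function whose stem function is holomorphic, i.e. `∂̄_c f = 0` off the reals. -/
def IsSliceRegular (Ω : Set ℍq) (f : ℍq → ℍq) : Prop :=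
  IsSlice Ω f ∧ DifferentiableOn ℝ f Ω ∧ ∀ x ∈ Ω, x.im ≠ 0 → cderivBar f x = 0

/-- Pointwise formula for the slice product `f·g = 𝓘(FG)` of two slice functions. -/
def sprod (f g : ℍq → ℍq) (x : ℍq) : ℍq :=
  svalue f x * svalue g x + x.im * x.im * (sderiv' f x * sderiv' g x)
    + x.im * (svalue f x * sderiv' g x + sderiv' f x * svalue g x)

/-- Characteristic polynomial of `q₀`: `Δ_{q₀}(x) = x² − 2 Re(q₀) x + |q₀|²`. -/
def Delta (q₀ : ℍq) (x : ℍq) : ℍq := x ^ 2 - 2 * (q₀.re : ℍq) * x + ((‖q₀‖ ^ 2 : ℝ) : ℍq)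

/-- The operator `∂_c ∂_s`. -/
def opCS (f : ℍq → ℍq) : ℍq → ℍq := cderiv (sderiv' f)

/-- The operator `∂_s ∂_c`. -/
def opSC (f : ℍq → ℍq) : ℍq → ℍq := sderiv' (cderiv f)

/-- The polynomial `𝔓_{q₀,m}(x) = m(x−q₀)^{·2} + (m+1)Δ_{q₀}(x)`, where
`(x−q₀)^{·2} = x² − x(2q₀) + q₀²` is the slice square of `x − q₀`. -/
def frakP (q₀ : ℍq) (m : ℕ) : ℍq → ℍq :=
  fun x => (m : ℍq) * (x ^ 2 - x * (2 * q₀) + q₀ ^ 2) + ((m : ℍq) + 1) * Delta q₀ x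

/-! After expanding, `𝔓_{q₀,m}(x) = x²(2m+1) + x b + c` is a quadratic slice polynomial with
coefficients on the right. For `p(x) = x²a + xb + c` the spherical derivative is `2 Re(x) a + b`,
because `x` and `x̄` commute, `x − x̄ = 2 Im x` and `x + x̄ = 2 Re x`; the slice derivative is the
formal derivative `2xa + b`, because the unit `J = Im x / |Im x|` commutes with `x` and `J² = −1`.
Hence `∂_c∂_s p = a` and `∂_s∂_c p = 2a`, and the values at `q₀` are evaluations of these formulas. -/

/- `simp` cannot compute the components of a numeral in `ℍ[ℝ]`, so numerals are moved to `ℝ`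
before `ext`. -/
lemma two_eq_coe : (2 : ℍq) = ((2 : ℝ) : ℍq) := QuaternionAlgebra.coe_ofNat.symm

lemma quaternion_two_ne_zero : (2 : ℍq) ≠ 0 := by
  rw [two_eq_coe, Ne, ← Quaternion.coe_zero, Quaternion.coe_inj]
  exact two_ne_zero

lemma half_smul_two_mul (z : ℍq) : (1 / 2 : ℝ) • (2 * z) = z := by
  rw [two_eq_coe, Quaternion.coe_mul_eq_smul, smul_smul]
  norm_num

lemma self_sub_star_eq_two_mul_im (x : ℍq) : x - star x = 2 * x.im := by
  rw [two_eq_coe]; ext <;> simp <;> ring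

lemma svalue_eq_of_add_star {f : ℍq → ℍq} {x v : ℍq} (h : f x + f (star x) = 2 * v) :
    svalue f x = v := by
  rw [svalue, h]
  exact div_eq_of_eq_mul quaternion_two_ne_zero (Commute.ofNat_left 2 v).eq

lemma sderiv'_eq_of_sub_star {f : ℍq → ℍq} {x d : ℍq} (hx : x.im ≠ 0)
    (h : f x - f (star x) = 2 * x.im * d) : sderiv' f x = d := by
  rw [sderiv', h, inv_mul_cancel_left₀ (mul_ne_zero quaternion_two_ne_zero hx)]

lemma qJ_mul_self {x : ℍq} (hx : x.im ≠ 0) : qJ x * qJ x = -1 := by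
  have hn : ‖x.im‖ ≠ 0 := norm_ne_zero_iff.2 hx
  rw [qJ, smul_mul_smul_comm, ← sq x.im, Quaternion.im_sq, Quaternion.normSq_eq_norm_mul_self,
    smul_neg, ← Quaternion.coe_smul, smul_eq_mul]
  field_simp
  simp

lemma commute_qJ_self (x : ℍq) : Commute (qJ x) x := by
  have h : Commute x.im x := by
    conv_rhs => rw [← Quaternion.re_add_im x]
    exact (Quaternion.coe_commute _ _).symm.add_right (Commute.refl _)
  exact h.smul_left _

lemma cderiv_congr {f g : ℍq → ℍq} {x : ℍq} (h : f =ᶠ[nhds x] g) : cderiv f x = cderiv g x := by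
  rw [cderiv, cderiv, h.fderiv_eq]

def rightQuadratic (a b c : ℍq) (x : ℍq) : ℍq := x ^ 2 * a + x * b + c

lemma rightQuadratic_sub_star (a b c x : ℍq) :
    rightQuadratic a b c x - rightQuadratic a b c (star x)
      = 2 * x.im * (2 * x.re * a + b) := by
  have hsq : x ^ 2 - star x ^ 2 = (x + star x) * (x - star x) :=
    (star_comm_self (x := x)).symm.sq_sub_sq
  have hc : Commute (x + star x) (x - star x) := by
    rw [Quaternion.self_add_star']; exact Quaternion.coe_commute _ _
  calc rightQuadratic a b c x - rightQuadratic a b c (star x)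
      = (x ^ 2 - star x ^ 2) * a + (x - star x) * b := by
        simp only [rightQuadratic]; noncomm_ring
    _ = (x - star x) * ((x + star x) * a + b) := by rw [hsq, hc.eq]; noncomm_ring
    _ = 2 * x.im * (2 * x.re * a + b) := by
      rw [self_sub_star_eq_two_mul_im, Quaternion.self_add_star]

lemma sderiv'_rightQuadratic (a b c : ℍq) {x : ℍq} (hx : x.im ≠ 0) :
    sderiv' (rightQuadratic a b c) x = 2 * x.re * a + b :=
  sderiv'_eq_of_sub_star hx (rightQuadratic_sub_star a b c x)

lemma fderiv_rightQuadratic_apply (a b c x h : ℍq) :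
    fderiv ℝ (rightQuadratic a b c) x h = (x * h + h * x) * a + h * b := by
  have hid := hasFDerivAt_id (𝕜 := ℝ) x
  have hd : HasFDerivAt (fun y : ℍq => y * y * a + y * b + c) _ x :=
    (((hid.fun_mul' hid).mul_const' a).fun_add (hid.mul_const' b)).add_const c
  rw [show rightQuadratic a b c = fun y => y * y * a + y * b + c by
    funext y; simp [rightQuadratic, sq], hd.fderiv]
  simp [add_mul]

lemma cderiv_rightQuadratic (a b c : ℍq) {x : ℍq} (hx : x.im ≠ 0) :
    cderiv (rightQuadratic a b c) x = 2 * x * a + b := by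
  have hJ := qJ_mul_self hx
  have hJx := commute_qJ_self x
  set J := qJ x
  have hJxJ : J * x * J = x * (J * J) := by rw [hJx.eq, mul_assoc]
  have hrot : J * ((x * J + J * x) * a + J * b) = -(2 * x * a + b) :=
    calc J * ((x * J + J * x) * a + J * b) = (J * x * J + J * J * x) * a + J * J * b := by
          noncomm_ring
      _ = -(2 * x * a + b) := by rw [hJxJ, hJ]; noncomm_ring
  rw [cderiv, fderiv_rightQuadratic_apply, fderiv_rightQuadratic_apply, hrot]
  convert half_smul_two_mul (2 * x * a + b) using 2
  noncomm_ring

def reCLM : ℍq →L[ℝ] ℍq where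
  toFun y := (y.re : ℍq)
  map_add' a b := by ext <;> simp
  map_smul' r a := by ext <;> simp
  cont := Quaternion.continuous_coe.comp Quaternion.continuous_re

lemma cderiv_two_re_mul_add (a b x : ℍq) : cderiv (fun y => 2 * (y.re : ℍq) * a + b) x = a := by
  have hd : HasFDerivAt (fun y : ℍq => 2 * (y.re : ℍq) * a + b) _ x :=
    ((reCLM.hasFDerivAt.const_mul 2).mul_const' a).add_const b
  rw [cderiv, hd.fderiv]
  simpa [reCLM, qJ] using half_smul_two_mul a

lemma opCS_rightQuadratic (a b c : ℍq) {x : ℍq} (hx : x.im ≠ 0) :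
    opCS (rightQuadratic a b c) x = a := by
  have hopen : IsOpen {y : ℍq | y.im ≠ 0} := isOpen_ne_fun Quaternion.continuous_im continuous_const
  have h : sderiv' (rightQuadratic a b c) =ᶠ[nhds x] fun y => 2 * (y.re : ℍq) * a + b :=
    Filter.eventuallyEq_of_mem (hopen.mem_nhds hx) fun y hy => sderiv'_rightQuadratic a b c hy
  rw [opCS, cderiv_congr h, cderiv_two_re_mul_add]

lemma opSC_rightQuadratic (a b c : ℍq) {x : ℍq} (hx : x.im ≠ 0) :
    opSC (rightQuadratic a b c) x = 2 * a := by
  have hx' : (star x).im ≠ 0 := by simpa using hx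
  refine sderiv'_eq_of_sub_star hx ?_
  rw [cderiv_rightQuadratic a b c hx, cderiv_rightQuadratic a b c hx',
    show 2 * x * a + b - (2 * star x * a + b) = 2 * (x - star x) * a by noncomm_ring,
    self_sub_star_eq_two_mul_im]
  noncomm_ring

lemma frakP_eq_rightQuadratic (q₀ : ℍq) (m : ℕ) :
    frakP q₀ m = rightQuadratic (2 * m + 1) (-(2 * m * q₀ + 2 * (m + 1) * q₀.re))
      (m * q₀ ^ 2 + (m + 1) * ((‖q₀‖ ^ 2 : ℝ) : ℍq)) := by
  funext x
  rw [frakP, Delta, rightQuadratic, two_eq_coe]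
  ext <;> simp [sq] <;> ring

theorem frakP_derivatives_general (q₀ : ℍq) (hq₀ : q₀.im ≠ 0) (m : ℕ) :
    svalue (frakP q₀ m) q₀ = 2 * (m : ℍq) * q₀.im ^ 2
    ∧ sderiv' (frakP q₀ m) q₀ = -(2 * (m : ℍq)) * q₀.im
    ∧ cderiv (frakP q₀ m) q₀ = 2 * ((m : ℍq) + 1) * q₀.im
    ∧ (∀ x : ℍq, x.im ≠ 0 →
        opCS (frakP q₀ m) x = 2 * (m : ℍq) + 1
        ∧ opSC (frakP q₀ m) x = 2 * (2 * (m : ℍq) + 1)) := by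
  rw [frakP_eq_rightQuadratic]
  refine ⟨svalue_eq_of_add_star ?_, ?_, ?_, fun x hx =>
    ⟨opCS_rightQuadratic _ _ _ hx, opSC_rightQuadratic _ _ _ hx⟩⟩
  · rw [rightQuadratic, rightQuadratic, two_eq_coe]
    ext <;> simp [sq, ← Quaternion.normSq_eq_norm_mul_self, Quaternion.normSq_def'] <;> ring
  · rw [sderiv'_rightQuadratic _ _ _ hq₀, two_eq_coe]
    ext <;> simp; ring
  · rw [cderiv_rightQuadratic _ _ _ hq₀, two_eq_coe]
    ext <;> simp <;> ring

/-- values and derivatives of `𝔓_{q₀,m}`. -/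
theorem frakP_derivatives (q₀ : ℍq) (hq₀ : q₀.im ≠ 0) (m : ℕ) (hm : 1 ≤ m) :
    svalue (frakP q₀ m) q₀ = 2 * (m : ℍq) * q₀.im ^ 2
    ∧ sderiv' (frakP q₀ m) q₀ = -(2 * (m : ℍq)) * q₀.im
    ∧ cderiv (frakP q₀ m) q₀ = 2 * ((m : ℍq) + 1) * q₀.im
    ∧ (∀ x : ℍq, x.im ≠ 0 →
        opCS (frakP q₀ m) x = 2 * (m : ℍq) + 1
        ∧ opSC (frakP q₀ m) x = 2 * (2 * (m : ℍq) + 1)) :=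
  frakP_derivatives_general q₀ hq₀ m
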